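/- (Strassen's commutator lower bound, as used in the paper.) Let A be a finite-dimensional complex vector space, let b ≥ 1, and let T ∈ A ⊗ ℂ^b ⊗ ℂ^b, regarded as a linear map φ: A* → Mat_{b×b}(ℂ). Suppose there exists α0 ∈ A* with φ(α0) invertible. Then for all α1, α2 ∈ A*, setting X1 = φ(α1)·φ(α0)^{−1} and X2 = φ(α2)·φ(α0)^{−1}, the border rank of T satisfies R̲(T) ≥ b + (1/2)·rank(X1·X2 − X2·X1). -/

import Mathlib

/-- A simple (rank-one) tensor in coordinates: `(u ⊗ v ⊗ w)_{ijk} = u_i v_j w_k`. -/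
def simpleTensor {ι₁ ι₂ ι₃ : Type} (u : ι₁ → ℂ) (v : ι₂ → ℂ) (w : ι₃ → ℂ) :
    ι₁ → ι₂ → ι₃ → ℂ :=
  fun i j k => u i * v j * w k

/-- The set of tensors of rank at most `r`: sums of `r` simple tensors. -/
def rankAtMost (ι₁ ι₂ ι₃ : Type) (r : ℕ) : Set (ι₁ → ι₂ → ι₃ → ℂ) :=
  {T | ∃ u : Fin r → ι₁ → ℂ, ∃ v : Fin r → ι₂ → ℂ, ∃ w : Fin r → ι₃ → ℂ,
    T = ∑ s : Fin r, simpleTensor (u s) (v s) (w s)}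

/-- The border rank of a tensor: the least `r` such that `T` lies in the closure of the
set of tensors of rank at most `r`. -/
noncomputable def borderRank {ι₁ ι₂ ι₃ : Type} (T : ι₁ → ι₂ → ι₃ → ℂ) : ℕ :=
  sInf {r : ℕ | T ∈ closure (rankAtMost ι₁ ι₂ ι₃ r)}

/-- The matrix multiplication tensor `M_{⟨n,m,p⟩} = ∑ x^i_j ⊗ y^j_k ⊗ z^k_i`
in coordinates: the first factor is indexed by pairs `(i,j)`, the second by `(j,k)`,
the third by `(k,i)`. -/
def matMulTensor (n m p : ℕ) :
    (Fin n × Fin m) → (Fin m × Fin p) → (Fin p × Fin n) → ℂ :=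
  fun x y z => if x.2 = y.1 ∧ y.2 = z.1 ∧ z.2 = x.1 then 1 else 0

/-- The BCLRS tensor `T_{BCLRS,m} = M_{⟨m,2,2⟩} − x^1_1 ⊗ (y^1_1 ⊗ z^1_1 + y^1_2 ⊗ z^2_1)`
(indices written 1-based in the literature, 0-based here). -/
def TBCLRS (m : ℕ) : (Fin m × Fin 2) → (Fin 2 × Fin 2) → (Fin 2 × Fin m) → ℂ :=
  fun x y z =>
    matMulTensor m 2 2 x y z -
      (if x.1.val = 0 ∧ x.2.val = 0 then 1 else 0) *
        ((if y.1.val = 0 ∧ y.2.val = 0 then 1 else 0) *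
            (if z.1.val = 0 ∧ z.2.val = 0 then 1 else 0) +
          (if y.1.val = 0 ∧ y.2.val = 1 then 1 else 0) *
            (if z.1.val = 1 ∧ z.2.val = 0 then 1 else 0))

/-!
If `T = ∑ₛ uₛ ⊗ vₛ ⊗ wₛ` has rank `r`, every slice factors as `V * diagonal d * W`. With
`G₀ = V D₀ W` and `P = W G₀⁻¹ V` one has `P D₀ P = P` and `[X₁, X₂] = V (D₁ P D₂ - D₂ P D₁) W G₀⁻¹`.
Replacing `P` by the diagonal pseudo-inverse of `D₀` would make `D₁ P D₂ - D₂ P D₁` vanish, and the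
defect is controlled by the idempotents `1 - E`, `E - E P D₀` (`E` the support projection of `d₀`),
whose ranks add up to at most `r - rank P ≤ r - b`; hence `rank [X₁, X₂] ≤ 2 (r - b)`.
For border rank, approximate `T` by tensors of rank `R̲(T)`: invertibility of the first slice is an
open condition, and near `T` the commutator depends continuously on the tensor while matrix rank is
lower semicontinuous, so the bound survives the limit.
-/

open Matrix Filter Topology

namespace Matrix

variable {m n K : Type*} [Fintype n] [Field K]

theorem rank_add_le (A B : Matrix m n K) : (A + B).rank ≤ A.rank + B.rank := by
  refine (Submodule.finrank_mono ?_).trans (Submodule.finrank_add_le_finrank_add_finrank _ _)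
  rintro _ ⟨x, rfl⟩
  simpa [add_mulVec] using Submodule.add_mem_sup (LinearMap.mem_range_self A.mulVecLin x)
    (LinearMap.mem_range_self B.mulVecLin x)

theorem rank_sub_le (A B : Matrix m n K) : (A - B).rank ≤ A.rank + B.rank := by
  refine (Submodule.finrank_mono ?_).trans (Submodule.finrank_add_le_finrank_add_finrank _ _)
  rintro _ ⟨x, rfl⟩
  simpa [sub_mulVec] using Submodule.sub_mem_sup (LinearMap.mem_range_self A.mulVecLin x)
    (LinearMap.mem_range_self B.mulVecLin x)

theorem rank_mul_mul_le {l o : Type*} [Fintype m] [Fintype o] (A : Matrix l m K)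
    (B : Matrix m n K) (C : Matrix n o K) : (A * B * C).rank ≤ B.rank :=
  (rank_mul_le_left _ _).trans (rank_mul_le_right _ _)

variable [DecidableEq n]

theorem rank_le_two_mul_rank_one_sub_add_rank_mul_mul (E M : Matrix n n K) :
    M.rank ≤ 2 * (1 - E).rank + (E * M * E).rank := by
  have hM : M = (1 - E) * M + E * M * (1 - E) + E * M * E := by noncomm_ring
  calc M.rank ≤ ((1 - E) * M).rank + (E * M * (1 - E)).rank + (E * M * E).rank := by
        conv_lhs => rw [hM]
        exact (rank_add_le _ _).trans (add_le_add_left (rank_add_le _ _) _)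
    _ ≤ 2 * (1 - E).rank + (E * M * E).rank := by
        have := rank_mul_le_left (1 - E) M
        have := rank_mul_le_right (E * M) (1 - E)
        omega

theorem cast_rank_eq_trace {P : Matrix n n K} (hP : IsIdempotentElem P) :
    (P.rank : K) = P.trace := by
  have h : IsIdempotentElem (toLin' P) := hP.map toLinAlgEquiv'
  rw [← trace_toLin'_eq, LinearMap.IsProj.trace (LinearMap.IsIdempotentElem.isProj_range _ h)]
  rfl

theorem rank_one_sub_add_rank_sub_add_rank [CharZero K] {E Q : Matrix n n K}
    (hE : IsIdempotentElem E) (hQ : IsIdempotentElem Q) (hEQ : E * Q = Q) (hQE : Q * E = Q) :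
    (1 - E).rank + (E - Q).rank + Q.rank = Fintype.card n := by
  have h₁ : IsIdempotentElem (1 - E) := hE.one_sub
  have h₂ : IsIdempotentElem (E - Q) := by
    simp only [IsIdempotentElem, sub_mul, mul_sub, hE.eq, hEQ, hQE, hQ.eq, sub_self, sub_zero]
  have : ((1 - E).rank + (E - Q).rank + Q.rank : K) = Fintype.card n := by
    rw [cast_rank_eq_trace h₁, cast_rank_eq_trace h₂, cast_rank_eq_trace hQ, trace_sub,
      trace_sub, trace_one]
    ring
  exact_mod_cast this

end Matrix

/- `diagonal (d₀ * d₀⁻¹)` is the projection onto the support of `d₀` and, because `0⁻¹ = 0`,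
`diagonal d₀⁻¹` is the pseudo-inverse of `diagonal d₀`. -/
section DiagonalSandwich

variable {σ K : Type*} [Fintype σ] [DecidableEq σ] [Field K] (d₀ : σ → K)

theorem rank_diagonal_support_mul_mul_le (d₁ d₂ : σ → K) (P : Matrix σ σ K) :
    (diagonal (d₀ * d₀⁻¹) * (diagonal d₁ * P * diagonal d₂ - diagonal d₂ * P * diagonal d₁) *
      diagonal (d₀ * d₀⁻¹)).rank ≤
      2 * (diagonal (d₀ * d₀⁻¹) - diagonal (d₀ * d₀⁻¹) * P * diagonal d₀).rank := by
  set E := diagonal (d₀ * d₀⁻¹)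
  set N := (E - E * P * diagonal d₀) * diagonal d₀⁻¹
  have hN : N = diagonal d₀⁻¹ - E * P * E := by
    have hE : E * diagonal d₀⁻¹ = diagonal d₀⁻¹ := by
      simp only [E, diagonal_mul_diagonal]
      congr 1
      ext s
      rcases eq_or_ne (d₀ s) 0 with h | h <;> simp [h]
    simp only [N, sub_mul, hE, mul_assoc, diagonal_mul_diagonal, E]
    rfl
  have hE₁ : Commute E (diagonal d₁) := commute_diagonal _ _
  have hE₂ : Commute E (diagonal d₂) := commute_diagonal _ _
  -- the pseudo-inverse part of `N` contributes nothing, since diagonal matrices commute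
  have h₁₂ : diagonal d₁ * (diagonal d₀⁻¹ * diagonal d₂) =
      diagonal d₂ * (diagonal d₀⁻¹ * diagonal d₁) := by
    simp only [diagonal_mul_diagonal]
    congr 1
    ext s
    ring
  have hblock : E * (diagonal d₁ * P * diagonal d₂ - diagonal d₂ * P * diagonal d₁) * E =
      diagonal d₂ * N * diagonal d₁ - diagonal d₁ * N * diagonal d₂ := by
    rw [hN]
    simp only [mul_sub, sub_mul, mul_assoc, ← hE₁.eq, ← hE₂.eq]
    rw [hE₁.left_comm, hE₂.left_comm, h₁₂]
    abel
  rw [hblock]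
  have := rank_sub_le (diagonal d₂ * N * diagonal d₁) (diagonal d₁ * N * diagonal d₂)
  have := rank_mul_mul_le (diagonal d₂) N (diagonal d₁)
  have := rank_mul_mul_le (diagonal d₁) N (diagonal d₂)
  have : N.rank ≤ (E - E * P * diagonal d₀).rank := rank_mul_le_left _ _
  omega

theorem rank_one_sub_diagonal_support_add_le [CharZero K] {P : Matrix σ σ K}
    (hP : P * diagonal d₀ * P = P) :
    (1 - diagonal (d₀ * d₀⁻¹)).rank +
      (diagonal (d₀ * d₀⁻¹) - diagonal (d₀ * d₀⁻¹) * P * diagonal d₀).rank + P.rank ≤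
      Fintype.card σ := by
  set E := diagonal (d₀ * d₀⁻¹)
  set Q := E * P * diagonal d₀
  have hE : IsIdempotentElem E := by
    simp only [IsIdempotentElem, E, diagonal_mul_diagonal]
    congr 1
    ext s
    rcases eq_or_ne (d₀ s) 0 with h | h <;> simp [h]
  have hD₀E : diagonal d₀ * E = diagonal d₀ := by simp [E, ← mul_assoc]
  have hQ : IsIdempotentElem Q := by
    calc Q * Q = E * (P * (diagonal d₀ * E) * P) * diagonal d₀ := by simp only [Q, mul_assoc]
      _ = Q := by rw [hD₀E, hP]
  have hPQ : P.rank ≤ Q.rank := by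
    have hP' : P = P * diagonal d₀ * Q * P := by
      calc P = P * diagonal d₀ * (P * diagonal d₀ * P) := by rw [hP, hP]
        _ = P * (diagonal d₀ * E) * P * diagonal d₀ * P := by rw [hD₀E]; simp only [mul_assoc]
        _ = P * diagonal d₀ * Q * P := by simp only [Q, mul_assoc]
    calc P.rank = (P * diagonal d₀ * Q * P).rank := by rw [← hP']
      _ ≤ Q.rank := rank_mul_mul_le _ _ _
  have := rank_one_sub_add_rank_sub_add_rank hE hQ
    (by simp only [Q, ← mul_assoc, hE.eq]) (by simp only [Q, mul_assoc, hD₀E])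
  omega

theorem rank_diagonal_sandwich_sub_add_two_mul_rank_le [CharZero K] (d₁ d₂ : σ → K)
    {P : Matrix σ σ K} (hP : P * diagonal d₀ * P = P) :
    (diagonal d₁ * P * diagonal d₂ - diagonal d₂ * P * diagonal d₁).rank + 2 * P.rank ≤
      2 * Fintype.card σ := by
  have := rank_le_two_mul_rank_one_sub_add_rank_mul_mul (diagonal (d₀ * d₀⁻¹))
    (diagonal d₁ * P * diagonal d₂ - diagonal d₂ * P * diagonal d₁)
  have := rank_diagonal_support_mul_mul_le d₀ d₁ d₂ P
  have := rank_one_sub_diagonal_support_add_le d₀ hP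
  omega

end DiagonalSandwich

section StrassenCommutator

variable {m σ K : Type*} [Fintype m] [DecidableEq m] [Field K]

noncomputable def strassenCommutator (G₀ G₁ G₂ : Matrix m m K) : Matrix m m K :=
  G₁ * G₀⁻¹ * (G₂ * G₀⁻¹) - G₂ * G₀⁻¹ * (G₁ * G₀⁻¹)

theorem rank_strassenCommutator_add_le [Fintype σ] [DecidableEq σ] [CharZero K]
    (V : Matrix m σ K) (W : Matrix σ m K) (d₀ d₁ d₂ : σ → K) (h : IsUnit (V * diagonal d₀ * W)) :
    (strassenCommutator (V * diagonal d₀ * W) (V * diagonal d₁ * W) (V * diagonal d₂ * W)).rank +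
      2 * Fintype.card m ≤ 2 * Fintype.card σ := by
  set G₀ := V * diagonal d₀ * W with hG₀
  set P := W * G₀⁻¹ * V
  have hinv : IsUnit G₀.det := (isUnit_iff_isUnit_det _).mp h
  have hP : P * diagonal d₀ * P = P := by
    calc P * diagonal d₀ * P = W * (G₀⁻¹ * G₀ * G₀⁻¹) * V := by
          simp only [P, hG₀, Matrix.mul_assoc]
      _ = P := by rw [nonsing_inv_mul _ hinv, Matrix.one_mul]
  have hcomm : strassenCommutator G₀ (V * diagonal d₁ * W) (V * diagonal d₂ * W) =
      V * (diagonal d₁ * P * diagonal d₂ - diagonal d₂ * P * diagonal d₁) * (W * G₀⁻¹) := by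
    simp only [strassenCommutator, P, Matrix.mul_sub, Matrix.sub_mul, Matrix.mul_assoc]
  have hcard : Fintype.card m ≤ P.rank := by
    calc Fintype.card m = (G₀ * G₀⁻¹ * G₀).rank := by
          rw [mul_nonsing_inv _ hinv, Matrix.one_mul, rank_of_isUnit _ h]
      _ = (V * diagonal d₀ * P * (diagonal d₀ * W)).rank := by
          simp only [P, hG₀, Matrix.mul_assoc]
      _ ≤ P.rank := rank_mul_mul_le _ _ _
  have := rank_diagonal_sandwich_sub_add_two_mul_rank_le d₀ d₁ d₂ hP
  have := rank_mul_mul_le V (diagonal d₁ * P * diagonal d₂ - diagonal d₂ * P * diagonal d₁)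
    (W * G₀⁻¹)
  rw [hcomm]
  omega

theorem ContinuousAt.strassenCommutator [TopologicalSpace K] [IsTopologicalDivisionRing K]
    {X : Type*} [TopologicalSpace X] {G₀ G₁ G₂ : X → Matrix m m K} {x : X}
    (h₀ : ContinuousAt G₀ x) (h₁ : ContinuousAt G₁ x) (h₂ : ContinuousAt G₂ x)
    (hx : IsUnit (G₀ x)) :
    ContinuousAt (fun y => strassenCommutator (G₀ y) (G₁ y) (G₂ y)) x := by
  have hdet : (G₀ x).det ≠ 0 := ((isUnit_iff_isUnit_det _).mp hx).ne_zero
  have hinv : ContinuousAt (fun y => (G₀ y)⁻¹) x :=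
    (continuousAt_matrix_inv _
      (by simpa [Ring.inverse_eq_inv'] using continuousAt_inv₀ hdet)).comp h₀
  have hX₁ := h₁.mul hinv
  have hX₂ := h₂.mul hinv
  exact (hX₁.mul hX₂).sub (hX₂.mul hX₁)

end StrassenCommutator

namespace Matrix

variable {m K : Type*} [Fintype m] [DecidableEq m] [Field K] [TopologicalSpace K]
  [IsTopologicalRing K] [T1Space K]

theorem eventually_isUnit {A : Matrix m m K} (hA : IsUnit A) : ∀ᶠ B in 𝓝 A, IsUnit B := by
  have hdet : A.det ≠ 0 := ((isUnit_iff_isUnit_det _).mp hA).ne_zero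
  filter_upwards [continuous_id.matrix_det.continuousAt.eventually_ne hdet] with B hB
  exact (isUnit_iff_isUnit_det _).mpr (isUnit_iff_ne_zero.mpr hB)

-- the normal form `V A U = 1 ⊕ 0` exhibits an invertible `rank A × rank A` block of `V A U`
theorem eventually_rank_le (A : Matrix m m K) : ∀ᶠ B in 𝓝 A, A.rank ≤ B.rank := by
  obtain ⟨V, U, e, -, -, hA⟩ := exists_rank_normal_form A
  set f : Fin A.rank → m := e.symm ∘ Sum.inl
  have hf : (V * A * U).submatrix f f = 1 := by
    ext i j
    simp [hA, f]
  have hcont : Continuous fun B : Matrix m m K => ((V * B * U).submatrix f f).det :=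
    ((continuous_const.matrix_mul continuous_id).matrix_mul continuous_const).matrix_submatrix
      f f |>.matrix_det
  have hA₀ : ((V * A * U).submatrix f f).det ≠ 0 := by rw [hf, det_one]; exact one_ne_zero
  filter_upwards [hcont.continuousAt.eventually_ne hA₀] with B hB
  calc A.rank = ((V * B * U).submatrix f f).rank := by
        rw [rank_of_det_ne_zero hB, Fintype.card_fin]
    _ ≤ (V * B * U).rank := rank_submatrix_le _ _ _
    _ ≤ B.rank := rank_mul_mul_le _ _ _

end Matrix

section Slices

variable {ι₁ ι₂ ι₃ : Type}

def slice [Fintype ι₁] (α : ι₁ → ℂ) (T : ι₁ → ι₂ → ι₃ → ℂ) : Matrix ι₂ ι₃ ℂ :=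
  Matrix.of fun j k => ∑ i, α i * T i j k

theorem continuous_slice [Fintype ι₁] (α : ι₁ → ℂ) :
    Continuous (slice α : (ι₁ → ι₂ → ι₃ → ℂ) → Matrix ι₂ ι₃ ℂ) := by
  unfold slice
  fun_prop

theorem slice_sum_simpleTensor {σ : Type*} [Fintype ι₁] [Fintype σ] [DecidableEq σ]
    (α : ι₁ → ℂ) (u : σ → ι₁ → ℂ) (v : σ → ι₂ → ℂ) (w : σ → ι₃ → ℂ) :
    slice α (∑ s, simpleTensor (u s) (v s) (w s)) =
      (of fun j s => v s j) * diagonal (fun s => ∑ i, α i * u s i) * of fun s k => w s k := by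
  ext j k
  rw [mul_apply]
  simp only [slice, simpleTensor, of_apply, Finset.sum_apply, mul_diagonal, Finset.mul_sum,
    Finset.sum_mul]
  rw [Finset.sum_comm]
  refine Finset.sum_congr rfl fun s _ => Finset.sum_congr rfl fun i _ => ?_
  ring

theorem sum_simpleTensor_mem_rankAtMost {σ : Type*} [Fintype σ] (u : σ → ι₁ → ℂ)
    (v : σ → ι₂ → ℂ) (w : σ → ι₃ → ℂ) :
    ∑ s, simpleTensor (u s) (v s) (w s) ∈ rankAtMost ι₁ ι₂ ι₃ (Fintype.card σ) :=
  let e := Fintype.equivFin σ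
  ⟨u ∘ e.symm, v ∘ e.symm, w ∘ e.symm, (e.symm.sum_comp _).symm⟩

theorem exists_mem_rankAtMost [Fintype ι₁] [Fintype ι₂] (T : ι₁ → ι₂ → ι₃ → ℂ) :
    ∃ r, T ∈ rankAtMost ι₁ ι₂ ι₃ r := by
  classical
  refine ⟨Fintype.card (ι₁ × ι₂), ?_⟩
  convert sum_simpleTensor_mem_rankAtMost (fun p : ι₁ × ι₂ => Pi.single p.1 1)
    (fun p => Pi.single p.2 1) (fun p => T p.1 p.2)
  ext i j k
  simp [simpleTensor, Finset.sum_apply, Pi.single_apply, Fintype.sum_prod_type]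

theorem mem_closure_rankAtMost_borderRank [Fintype ι₁] [Fintype ι₂] (T : ι₁ → ι₂ → ι₃ → ℂ) :
    T ∈ closure (rankAtMost ι₁ ι₂ ι₃ (borderRank T)) :=
  Nat.sInf_mem (s := {r | T ∈ closure (rankAtMost ι₁ ι₂ ι₃ r)}) <|
    (exists_mem_rankAtMost T).imp fun _ hr => subset_closure hr

end Slices

theorem strassen_commutator_lower_bound_general {ι : Type} [Fintype ι] (b : ℕ)
    (T : ι → Fin b → Fin b → ℂ)
    (φ : (ι → ℂ) → Matrix (Fin b) (Fin b) ℂ)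
    (hφ : ∀ α : ι → ℂ, φ α = Matrix.of fun j k => ∑ i : ι, α i * T i j k)
    (α0 : ι → ℂ) (h0 : IsUnit (φ α0)) :
    ∀ α1 α2 : ι → ℂ,
      (b : ℝ) +
        (((φ α1 * (φ α0)⁻¹) * (φ α2 * (φ α0)⁻¹) -
            (φ α2 * (φ α0)⁻¹) * (φ α1 * (φ α0)⁻¹)).rank : ℝ) / 2 ≤
        (borderRank T : ℝ) := by
  intro α1 α2
  obtain rfl : φ = fun α => slice α T := funext hφ
  have hunit := (continuous_slice α0).continuousAt.eventually (eventually_isUnit h0)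
  have hrank := (ContinuousAt.strassenCommutator (continuous_slice α0).continuousAt
    (continuous_slice α1).continuousAt (continuous_slice α2).continuousAt h0).eventually
    (eventually_rank_le _)
  obtain ⟨_, ⟨u, v, w, rfl⟩, hunit', hle⟩ :=
    ((mem_closure_iff_frequently.mp (mem_closure_rankAtMost_borderRank T)).and_eventually
      (hunit.and hrank)).exists
  simp only [slice_sum_simpleTensor] at hunit' hle
  have hbound := (Nat.add_le_add_right hle _).trans
    (rank_strassenCommutator_add_le _ _ _ _ _ hunit')
  rw [Fintype.card_fin, Fintype.card_fin] at hbound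
  have : ((strassenCommutator (slice α0 T) (slice α1 T) (slice α2 T)).rank : ℝ) + 2 * b ≤
      2 * borderRank T := by
    exact_mod_cast hbound
  change (b : ℝ) + ((strassenCommutator (slice α0 T) (slice α1 T) (slice α2 T)).rank : ℝ) / 2 ≤ _
  linarith

/-- Strassen's commutator lower bound: if `T ∈ A ⊗ ℂ^b ⊗ ℂ^b` (with `A = ℂ^ι`), regarded via
contraction as a linear map `φ : A* → Mat_{b×b}(ℂ)`, admits `α0` with `φ(α0)` invertible, then
for all `α1, α2`, setting `X1 = φ(α1)·φ(α0)⁻¹` and `X2 = φ(α2)·φ(α0)⁻¹`,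
`R̲(T) ≥ b + (1/2)·rank(X1 X2 − X2 X1)`. -/
theorem strassen_commutator_lower_bound {ι : Type} [Fintype ι] (b : ℕ) (hb : 1 ≤ b)
    (T : ι → Fin b → Fin b → ℂ)
    (φ : (ι → ℂ) → Matrix (Fin b) (Fin b) ℂ)
    (hφ : ∀ α : ι → ℂ, φ α = Matrix.of fun j k => ∑ i : ι, α i * T i j k)
    (α0 : ι → ℂ) (h0 : IsUnit (φ α0)) :
    ∀ α1 α2 : ι → ℂ,
      (b : ℝ) +
        (((φ α1 * (φ α0)⁻¹) * (φ α2 * (φ α0)⁻¹) -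
            (φ α2 * (φ α0)⁻¹) * (φ α1 * (φ α0)⁻¹)).rank : ℝ) / 2 ≤
        (borderRank T : ℝ) :=
  strassen_commutator_lower_bound_general b T φ hφ α0 h0
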